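/- arXiv:2212.06020 — 2 statements merged into one kernel-verified Lean document; each statement's English description precedes it below -/
import Mathlib

section
/- Any group G belonging to the class C' contains a subgroup isomorphic to ℤ × ℤ/2ℤ. -/
/-- An involution of a group is an element of order 2. -/
def IsInvolution {G : Type*} [Monoid G] (g : G) : Prop := orderOf g = 2

/-- A group `G` acts sharply 2-transitively on `X` if `X` has at least two elements and
any pair of distinct points of `X` is sent to any other such pair by a unique element of `G`. -/
def SharplyTwoTransitive (G X : Type*) [Group G] [MulAction G X] : Prop :=
  Nontrivial X ∧ ∀ x₁ x₂ y₁ y₂ : X, x₁ ≠ x₂ → y₁ ≠ y₂ →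
    ∃! g : G, g • x₁ = y₁ ∧ g • x₂ = y₂
/-- A subgroup `D ≤ G` is malnormal if `D ∩ gDg⁻¹` is trivial for every `g ∉ D`. -/
def IsMalnormal {G : Type*} [Group G] (D : Subgroup G) : Prop :=
  ∀ g : G, g ∉ D → ∀ x : G, x ∈ D → g * x * g⁻¹ ∈ D → x = 1

/-- A subgroup `D ≤ G` is quasi-malnormal if `D ∩ gDg⁻¹` has at most 2 elements
for every `g ∉ D`. -/
def IsQuasiMalnormal {G : Type*} [Group G] (D : Subgroup G) : Prop :=
  ∀ g : G, g ∉ D → {x : G | x ∈ D ∧ g * x * g⁻¹ ∈ D}.encard ≤ 2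
/-- `AddAut A` as multiplicative automorphisms of `Multiplicative A`. -/
def addAutToMulAut (A : Type*) [AddGroup A] : Multiplicative (AddAut A) →* MulAut (Multiplicative A) where
  toFun f := AddEquiv.toMultiplicative f.toAdd
  map_one' := rfl
  map_mul' _ _ := rfl

/-- The action of `ℤˣ = {±1} ≃ ℤ/2ℤ` on `ℚ` by multiplication (i.e. the nontrivial element
acts by negation), as automorphisms of the additive group `ℚ` written multiplicatively. -/
def dqAut : ℤˣ →* MulAut (Multiplicative ℚ) :=
  (addAutToMulAut ℚ).comp (DistribMulAction.toAddAut ℤˣ ℚ)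

/-- The group `D_ℚ = ℚ ⋊ ℤ/2ℤ`, where `ℤ/2ℤ` acts by negation. -/
abbrev DQ : Type := SemidirectProduct (Multiplicative ℚ) ℤˣ dqAut
/-- A pair of distinct involutions `(u, v)` has type `D_ℤ` if `⟨u, v⟩` is contained in a
quasi-malnormal subgroup of `G` isomorphic to the infinite dihedral group
`D_ℤ = ℤ ⋊ ℤ/2ℤ` (which is `DihedralGroup 0` in Mathlib). -/
def PairTypeDZ {G : Type*} [Group G] (u v : G) : Prop :=
  ∃ D : Subgroup G, Subgroup.closure {u, v} ≤ D ∧ IsQuasiMalnormal D ∧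
    Nonempty (D ≃* DihedralGroup 0)

/-- A pair of distinct involutions `(u, v)` has type `D_ℚ` if `⟨u, v⟩` is contained in a
subgroup of `G` isomorphic to `D_ℚ = ℚ ⋊ ℤ/2ℤ`. -/
def PairTypeDQ {G : Type*} [Group G] (u v : G) : Prop :=
  ∃ D : Subgroup G, Subgroup.closure {u, v} ≤ D ∧ Nonempty (D ≃* DQ)

/-- The class `𝒞`: (1) `G` acts by conjugation transitively on its involutions and freely on
ordered pairs of distinct involutions; (2) every pair of distinct involutions has type `D_ℤ`
or type `D_ℚ`; (3) there is a pair of type `D_ℚ`, and `G` acts transitively (by conjugation)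
on the set of pairs of type `D_ℚ`. -/
def ClassC (G : Type*) [Group G] : Prop :=
  (∀ u v : G, IsInvolution u → IsInvolution v → ∃ g : G, g * u * g⁻¹ = v) ∧
  (∀ u v g : G, IsInvolution u → IsInvolution v → u ≠ v →
      g * u * g⁻¹ = u → g * v * g⁻¹ = v → g = 1) ∧
  (∀ u v : G, IsInvolution u → IsInvolution v → u ≠ v → PairTypeDZ u v ∨ PairTypeDQ u v) ∧
  (∃ u v : G, IsInvolution u ∧ IsInvolution v ∧ u ≠ v ∧ PairTypeDQ u v) ∧
  (∀ u v u' v' : G, IsInvolution u → IsInvolution v → u ≠ v → PairTypeDQ u v →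
      IsInvolution u' → IsInvolution v' → u' ≠ v' → PairTypeDQ u' v' →
      ∃ g : G, g * u * g⁻¹ = u' ∧ g * v * g⁻¹ = v')

/-- A translation is an element of infinite order which is a product of two
distinct involutions. -/
def IsTranslation {G : Type*} [Group G] (h : G) : Prop :=
  orderOf h = 0 ∧ ∃ u v : G, IsInvolution u ∧ IsInvolution v ∧ u ≠ v ∧ h = u * v

/-- A homothety is an element of infinite order centralizing some involution. -/
def IsHomothety {G : Type*} [Group G] (h : G) : Prop :=
  orderOf h = 0 ∧ ∃ u : G, IsInvolution u ∧ h * u = u * h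

/-- An element is isolated if it has infinite order and lies in a malnormal infinite
cyclic subgroup. -/
def IsIsolated {G : Type*} [Group G] (h : G) : Prop :=
  orderOf h = 0 ∧ ∃ Z : Subgroup G, h ∈ Z ∧ IsMalnormal Z ∧ IsCyclic Z ∧ Infinite Z

/-- The 3-type condition: every element has order 1, 2 or infinite, and every element of
infinite order is a translation, a homothety, or isolated. -/
def ThreeTypeCondition (G : Type*) [Group G] : Prop :=
  (∀ g : G, orderOf g = 1 ∨ orderOf g = 2 ∨ orderOf g = 0) ∧
  (∀ g : G, orderOf g = 0 → IsTranslation g ∨ IsHomothety g ∨ IsIsolated g)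

/-- The class `𝒞'`: groups in `𝒞` satisfying the 3-type condition. -/
def ClassC' (G : Type*) [Group G] : Prop := ClassC G ∧ ThreeTypeCondition G

/-! Let `(u, v)` be a pair of type `D_ℚ`, in a subgroup `D ≅ D_ℚ`. Since `D` has infinitely
many involutions, some involution `w ∈ D` lies outside `{u, v, u v u⁻¹}`; `(u, w)` again has
type `D_ℚ`, so some `g` satisfies `g u g⁻¹ = u` and `g v g⁻¹ = w`. Then `g ≠ 1`, and `g` is not an
involution: `g = u` would give `w = u v u⁻¹`, while two distinct commuting involutions `x, y`
would both be centralized by `x y ≠ 1`. By the 3-type condition `g` has infinite order, and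
together with `u` it generates `ℤ × ℤ/2ℤ`. -/
theorem IsInvolution.mul_self {G : Type*} [Monoid G] {u : G} (hu : IsInvolution u) :
    u * u = 1 := by
  rw [← pow_two, ← hu, pow_orderOf_eq_one]

namespace DQ

def reflection (q : ℚ) : DQ := ⟨Multiplicative.ofAdd q, -1⟩

theorem reflection_injective : Function.Injective reflection := fun _ _ h =>
  Multiplicative.ofAdd.injective (congrArg SemidirectProduct.left h)

theorem isInvolution_reflection (q : ℚ) : IsInvolution (reflection q) := by
  have : Fact (Nat.Prime 2) := ⟨Nat.prime_two⟩
  refine orderOf_eq_prime ?_ fun h => by simpa [reflection] using congrArg SemidirectProduct.right h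
  rw [reflection, pow_two]
  ext
  · change q + (-1 : ℤˣ) • q = 0
    simp [Units.smul_def]
  · simp

end DQ

theorem Subgroup.exists_isInvolution_mem_notMem_of_mulEquiv_DQ {G : Type*} [Group G]
    {D : Subgroup G} (e : D ≃* DQ) (s : Finset G) : ∃ w ∈ D, IsInvolution w ∧ w ∉ s := by
  let w : ℚ → G := fun q => e.symm (DQ.reflection q)
  have hw : Function.Injective w :=
    Subtype.val_injective.comp (e.symm.injective.comp DQ.reflection_injective)
  obtain ⟨-, ⟨q, rfl⟩, hq⟩ := (Set.infinite_range_of_injective hw).exists_notMem_finset s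
  refine ⟨w q, (e.symm _).2, ?_, hq⟩
  rw [IsInvolution, Subgroup.orderOf_coe, MulEquiv.orderOf_eq]
  exact DQ.isInvolution_reflection q

open Subgroup in
theorem exists_mulEquiv_int_prod_zmod_two_of_commute {G : Type*} [Group G] {g u : G}
    (hg : orderOf g = 0) (hu : IsInvolution u) (hgu : Commute g u) :
    ∃ H : Subgroup G, Nonempty (H ≃* Multiplicative ℤ × Multiplicative (ZMod 2)) := by
  let ι : Multiplicative (ZMod 2) →* G := (zpowers u).subtype.comp
    (mulEquivOfCyclicCardEq (by rw [Nat.card_zpowers, hu]; simp)).toMonoidHom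
  have hι : ∀ x, ι x ∈ zpowers u := fun x => Subtype.prop _
  have hcomm : ∀ m x, Commute (zpowersHom G g m) (ι x) := by
    intro m x
    obtain ⟨k, hk⟩ := mem_zpowers_iff.mp (hι x)
    rw [← hk]
    exact hgu.zpow_zpow _ _
  have hzpow : Function.Injective (g ^ · : ℤ → G) :=
    injective_zpow_iff_not_isOfFinOrder.mpr (orderOf_eq_zero_iff.mp hg)
  have hinj : Function.Injective (MonoidHom.noncommCoprod _ _ hcomm) := by
    refine (MonoidHom.noncommCoprod_injective _ _ hcomm).mpr ⟨hzpow, ?_, ?_⟩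
    · exact Subtype.val_injective.comp (MulEquiv.injective _)
    · rw [Subgroup.disjoint_def]
      rintro - ⟨m, rfl⟩ ⟨x, hx⟩
      have hsq : x ^ 2 = 1 := by
        rw [← toAdd_eq_zero, toAdd_pow]
        exact (by decide : ∀ y : ZMod 2, 2 • y = 0) _
      have hm : g ^ (m.toAdd * 2) = g ^ (0 : ℤ) := by
        rw [zpow_mul, zpow_zero, ← zpowersHom_apply, ← hx, zpow_two, ← pow_two, ← map_pow, hsq,
          map_one]
      simp [show m.toAdd = 0 by have := hzpow hm; omega]
  exact ⟨_, ⟨(MonoidHom.ofInjective hinj).symm⟩⟩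

namespace ClassC

variable {G : Type*} [Group G]

theorem eq_of_commute_of_isInvolution (hC : ClassC G) {u v : G} (hu : IsInvolution u)
    (hv : IsInvolution v) (huv : Commute u v) : u = v := by
  by_contra hne
  have h1 : u * v = 1 :=
    hC.2.1 u v (u * v) hu hv hne ((Commute.refl u).mul_left huv.symm).mul_inv_cancel
      (huv.mul_left (Commute.refl v)).mul_inv_cancel
  rw [mul_eq_one_iff_eq_inv, ← mul_eq_one_iff_eq_inv.mp hv.mul_self] at h1
  exact hne h1

theorem exists_ne_one_not_isInvolution_commute (hC : ClassC G) :
    ∃ g u : G, g ≠ 1 ∧ ¬ IsInvolution g ∧ IsInvolution u ∧ Commute g u := by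
  classical
  obtain ⟨u, v, hu, hv, huv, D, hDle, ⟨e⟩⟩ := hC.2.2.2.1
  have huD : u ∈ D := hDle (Subgroup.subset_closure (by simp))
  obtain ⟨w, hwD, hw, hws⟩ := D.exists_isInvolution_mem_notMem_of_mulEquiv_DQ e {u, v, u * v * u⁻¹}
  simp only [Finset.mem_insert, Finset.mem_singleton, not_or] at hws
  obtain ⟨hwu, hwv, hwc⟩ := hws
  have huw : PairTypeDQ u w :=
    ⟨D, (Subgroup.closure_le D).mpr (Set.insert_subset huD (Set.singleton_subset_iff.mpr hwD)), ⟨e⟩⟩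
  obtain ⟨g, hgu, hgv⟩ := hC.2.2.2.2 u v u w hu hv huv ⟨D, hDle, ⟨e⟩⟩ hu hw (Ne.symm hwu) huw
  have hcomm : Commute g u := mul_inv_eq_iff_eq_mul.mp hgu
  refine ⟨g, u, ?_, fun hg => ?_, hu, hcomm⟩
  · rintro rfl
    simp only [one_mul, inv_one, mul_one] at hgv
    exact hwv hgv.symm
  · obtain rfl := hC.eq_of_commute_of_isInvolution hg hu hcomm
    exact hwc hgv.symm

end ClassC

/-- Any group of the class `𝒞'` contains a subgroup isomorphic to `ℤ × ℤ/2ℤ`. -/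
theorem stmt_14 {G : Type*} [Group G] (hC : ClassC' G) :
    ∃ H : Subgroup G, Nonempty (H ≃* Multiplicative ℤ × Multiplicative (ZMod 2)) := by
  obtain ⟨g, u, hg1, hg2, hu, hgu⟩ := hC.1.exists_ne_one_not_isInvolution_commute
  obtain hg | hg | hg := hC.2.1 g
  · exact absurd (orderOf_eq_one_iff.mp hg) hg1
  · exact absurd hg hg2
  · exact exists_mulEquiv_int_prod_zmod_two_of_commute hg hu hgu
end

section
/- Let G be a group acting sharply 2-transitively on a set X with the action of characteristic 0. Then for any two distinct involutions u, v of G, the subgroup ⟨u,v⟩ is contained in a subgroup of G isomorphic to D_ℚ = ℚ ⋊ ℤ/2ℤ. More precisely, there is an increasing chain of subgroups D₁ ⊆ D₂ ⊆ D₃ ⊆ … of G with D₁ = ⟨u,v⟩, each Dₙ isomorphic to the infinite dihedral group, and Dₙ₋₁ of index n in Dₙ for every n ≥ 2. -/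
/-- The action has characteristic 0: some involution has a fixed point, and the product of
any two distinct involutions has infinite order. -/
def ActionCharZero (G X : Type*) [Group G] [MulAction G X] : Prop :=
  (∃ (u : G) (x : X), IsInvolution u ∧ u • x = x) ∧
  ∀ u v : G, IsInvolution u → IsInvolution v → u ≠ v → orderOf (u * v) = 0
/-!
All involutions of a sharply 2-transitive group are conjugate, so in characteristic 0 each of them
fixes exactly one point, and two involutions with a common fixed point coincide (otherwise they
would commute and their product would be an involution). For involutions `u ≠ v` and `n ≥ 1`,
`j = u (uv)ⁿ` is again an involution, and an element fixing the point of `u` carries the pair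
`(u, j)` onto `(u, v)`; it carries `uv` to `u w` with `(u w)ⁿ = u v`, `w` being the image of `v`.
Iterating gives involutions `w₁ = v, w₂, …` with `(u wₙ₊₁)ⁿ⁺¹ = u wₙ`. As `u wₙ` has infinite
order, `⟨u, wₙ⟩` is the image of an embedding of `D_∞ = ⟨s₀, s₁⟩` sending `s₀, s₁` to `u, wₙ`,
under which `⟨u, wₙ₋₁⟩` is the image of `⟨s₀, sₙ⟩`, of index `n`. Finally, the `u wₙ` form a
coherent system of `n!`-th roots of `uv`, so `q ↦ (uv)^q` is a well-defined embedding of `ℚ`,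
inverted by `u`, and together with `u` it embeds `D_ℚ`.
-/

open Nat Subgroup

namespace DihedralGroup

def map {m n : ℕ} (f : ZMod m →+ ZMod n) : DihedralGroup m →* DihedralGroup n where
  toFun
    | r i => r (f i)
    | sr i => sr (f i)
  map_one' := by rw [one_def]; exact congrArg r (map_zero f)
  map_mul' := by rintro (i | i) (j | j) <;> simp [r_mul_r, r_mul_sr, sr_mul_r, sr_mul_sr]

@[simp] theorem map_r {m n : ℕ} (f : ZMod m →+ ZMod n) (i : ZMod m) :
    map f (r i) = r (f i) := rfl

@[simp] theorem map_sr {m n : ℕ} (f : ZMod m →+ ZMod n) (i : ZMod m) :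
    map f (sr i) = sr (f i) := rfl

theorem map_surjective {m n : ℕ} {f : ZMod m →+ ZMod n} (hf : Function.Surjective f) :
    Function.Surjective (map f) := by
  rintro (i | i) <;> obtain ⟨j, rfl⟩ := hf i
  exacts [⟨r j, rfl⟩, ⟨sr j, rfl⟩]

@[simp] theorem r_eq_one {n : ℕ} {i : ZMod n} : r i = 1 ↔ i = 0 := by
  rw [one_def, r.injEq]

@[simp] theorem sr_ne_one {n : ℕ} {i : ZMod n} : sr i ≠ 1 := by
  rw [one_def]; nofun

theorem mem_zpowers_sr {n : ℕ} {i : ZMod n} {x : DihedralGroup n} :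
    x ∈ zpowers (sr i) ↔ x = 1 ∨ x = sr i := by
  have h : IsOfFinOrder (sr i) := by simp [← orderOf_ne_zero_iff, orderOf_sr]
  classical
  simp [h.mem_zpowers_iff_mem_range_orderOf, orderOf_sr, Nat.le_one_iff_eq_zero_or_eq_one,
    or_and_right, exists_or, eq_comm]

theorem index_zpowers_sr (n : ℕ) (i : ZMod n) : (zpowers (sr i)).index = n := by
  have h := card_mul_index (zpowers (sr i))
  rw [Nat.card_zpowers, orderOf_sr, nat_card] at h
  omega

theorem index_closure_sr_zero_sr_natCast (n : ℕ) :
    (closure {sr 0, sr (n : ZMod 0)} : Subgroup (DihedralGroup 0)).index = n := by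
  set K : Subgroup (DihedralGroup 0) := closure {sr 0, sr (n : ZMod 0)}
  have hsr0 : sr 0 ∈ K := subset_closure (by simp)
  have hsrn : sr (n : ZMod 0) ∈ K := subset_closure (by simp)
  have hr (k : ℤ) : r (Int.cast (R := ZMod 0) (n * k)) ∈ K := by
    have h := zpow_mem (mul_mem hsr0 hsrn) k
    rwa [sr_mul_sr, sub_zero, r_zpow, ← Int.cast_natCast, ← Int.cast_mul] at h
  have hsr (k : ℤ) : sr (Int.cast (R := ZMod 0) (n * k)) ∈ K := by
    simpa [sr_mul_r] using mul_mem hsr0 (hr k)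
  set f : ZMod 0 →+ ZMod n := (ZMod.castHom (dvd_zero n) (ZMod n)).toAddMonoidHom
  have hK : K = comap (map f) (zpowers (sr 0)) := by
    apply le_antisymm
    · rw [closure_le]
      rintro x (rfl | rfl) <;> simp [f]
    · rintro (i | i) hx <;> obtain ⟨i, hi⟩ := ZMod.intCast_surjective i <;> subst hi <;>
        simp [f, mem_zpowers_sr, ZMod.intCast_zmod_eq_zero_iff_dvd] at hx <;>
        obtain ⟨k, rfl⟩ := hx
      exacts [hr _, hsr _]
  have hf : Function.Surjective f := ZMod.ringHom_surjective (ZMod.castHom (dvd_zero n) (ZMod n))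
  rw [hK]
  exact (index_comap_of_surjective _ (map_surjective hf)).trans (index_zpowers_sr n 0)

theorem closure_sr_zero_sr_one : (closure {sr 0, sr 1} : Subgroup (DihedralGroup 0)) = ⊤ := by
  simpa using index_closure_sr_zero_sr_natCast 1

end DihedralGroup

namespace IsInvolution

variable {G : Type*} [Group G] {u : G}

theorem mul_self_s15 (hu : IsInvolution u) : u * u = 1 := by
  rw [← pow_two, ← hu, pow_orderOf_eq_one]

theorem ne_one (hu : IsInvolution u) : u ≠ 1 := by
  rintro rfl
  simp [IsInvolution] at hu

theorem conj (hu : IsInvolution u) (c : G) : IsInvolution (c * u * c⁻¹) := by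
  rw [IsInvolution, ← MulAut.conj_apply, MulEquiv.orderOf_eq]
  exact hu

theorem smul_smul_self {X : Type*} [MulAction G X] (hu : IsInvolution u) (x : X) :
    u • u • x = x := by
  rw [smul_smul, hu.mul_self_s15, one_smul]

end IsInvolution

section DihedralLift

open DihedralGroup

variable {G : Type*} [Group G] {u v : G}

theorem conj_mul_eq_inv (hu : u * u = 1) (hv : v * v = 1) :
    u * (u * v) * u⁻¹ = (u * v)⁻¹ := by
  rw [mul_inv_rev, inv_eq_of_mul_eq_one_right hu, inv_eq_of_mul_eq_one_right hv, ← mul_assoc, hu,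
    one_mul]

theorem mul_zpow_neg_eq_zpow_mul (hu : u * u = 1) (hv : v * v = 1) (i : ℤ) :
    u * (u * v) ^ (-i) = (u * v) ^ i * u := by
  rw [← mul_inv_eq_iff_eq_mul, ← MulAut.conj_apply, map_zpow, MulAut.conj_apply,
    conj_mul_eq_inv hu hv, inv_zpow', neg_neg]

-- `ZMod 0` is `ℤ` by definition, so `show ℤ from i` is a no-op.
def dihedralLift (u v : G) (hu : u * u = 1) (hv : v * v = 1) : DihedralGroup 0 →* G where
  toFun
    | r i => (u * v) ^ (show ℤ from i)
    | sr i => u * (u * v) ^ (show ℤ from i)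
  map_one' := zpow_zero _
  map_mul' := by
    rintro (i | i) (j | j)
    · exact zpow_add _ _ _
    · show u * (u * v) ^ (show ℤ from j - i) =
        (u * v) ^ (show ℤ from i) * (u * (u * v) ^ (show ℤ from j))
      rw [← mul_assoc, ← mul_zpow_neg_eq_zpow_mul hu hv, mul_assoc, ← zpow_add, neg_add_eq_sub]
      rfl
    · exact (congrArg (u * ·) (zpow_add _ _ _)).trans (mul_assoc _ _ _).symm
    · show (u * v) ^ (show ℤ from j - i) =
        u * (u * v) ^ (show ℤ from i) * (u * (u * v) ^ (show ℤ from j))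
      rw [mul_assoc u, ← mul_assoc _ u, ← mul_zpow_neg_eq_zpow_mul hu hv, ← mul_assoc,
        ← mul_assoc, hu, one_mul, ← zpow_add, neg_add_eq_sub]
      rfl

theorem dihedralLift_r_intCast (hu : u * u = 1) (hv : v * v = 1) (k : ℤ) :
    dihedralLift u v hu hv (r (Int.cast k)) = (u * v) ^ k := rfl

theorem dihedralLift_sr_intCast (hu : u * u = 1) (hv : v * v = 1) (k : ℤ) :
    dihedralLift u v hu hv (sr (Int.cast k)) = u * (u * v) ^ k := rfl

theorem dihedralLift_sr_natCast (hu : u * u = 1) (hv : v * v = 1) (n : ℕ) :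
    dihedralLift u v hu hv (sr n) = u * (u * v) ^ n := by
  rw [← Int.cast_natCast, dihedralLift_sr_intCast, zpow_natCast]

theorem dihedralLift_sr_zero (hu : u * u = 1) (hv : v * v = 1) :
    dihedralLift u v hu hv (sr 0) = u := by
  simpa using dihedralLift_sr_natCast hu hv 0

theorem dihedralLift_injective (hu : u * u = 1) (hv : v * v = 1) (h : orderOf (u * v) = 0) :
    Function.Injective (dihedralLift u v hu hv) := by
  have hinj := injective_zpow_iff_not_isOfFinOrder.mpr (orderOf_eq_zero_iff.mp h)
  rw [injective_iff_map_eq_one]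
  rintro (i | i) hi <;> obtain ⟨i, rfl⟩ := ZMod.intCast_surjective i
  · rw [dihedralLift_r_intCast] at hi
    exact r_eq_one.mpr (hinj (hi.trans (zpow_zero _).symm))
  · exfalso
    rw [dihedralLift_sr_intCast] at hi
    -- `u` would be a power of `u * v`, hence commute with it, while it also inverts it
    have hu' : u = (u * v) ^ (-i) := by rw [zpow_neg]; exact eq_inv_of_mul_eq_one_left hi
    have hcomm := (Commute.refl (u * v)).zpow_left (-i)
    rw [← hu'] at hcomm
    have h1 := mul_zpow_neg_eq_zpow_mul hu hv 1
    rw [zpow_one, ← hcomm.eq, zpow_neg_one] at h1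
    have hsq : (u * v) ^ (2 : ℤ) = (u * v) ^ (0 : ℤ) := by
      rw [zpow_two, zpow_zero]
      nth_rewrite 1 [← mul_left_cancel h1]
      exact inv_mul_cancel _
    exact absurd (hinj hsq) (by norm_num)

theorem dihedralLift_range (hu : u * u = 1) (hv : v * v = 1) :
    (dihedralLift u v hu hv).range = closure {u, v} := by
  have h1 : dihedralLift u v hu hv (sr 1) = v := by
    simpa [← mul_assoc, hu] using dihedralLift_sr_natCast hu hv 1
  rw [MonoidHom.range_eq_map, ← closure_sr_zero_sr_one, MonoidHom.map_closure, Set.image_pair,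
    dihedralLift_sr_zero, h1]

theorem nonempty_closure_pair_mulEquiv (hu : u * u = 1) (hv : v * v = 1)
    (h : orderOf (u * v) = 0) : Nonempty (closure {u, v} ≃* DihedralGroup 0) :=
  ⟨((MonoidHom.ofInjective (dihedralLift_injective hu hv h)).trans
    (MulEquiv.subgroupCongr (dihedralLift_range hu hv))).symm⟩

theorem closure_pair_mul_pow_le (u w : G) (n : ℕ) :
    closure {u, u * (u * w) ^ n} ≤ closure {u, w} := by
  have hu : u ∈ closure {u, w} := subset_closure (Set.mem_insert _ _)
  have hw : w ∈ closure {u, w} := subset_closure (Set.mem_insert_of_mem _ rfl)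
  rw [closure_le, Set.insert_subset_iff, Set.singleton_subset_iff]
  exact ⟨hu, mul_mem hu (pow_mem (mul_mem hu hw) n)⟩

theorem relIndex_closure_pair {w : G} (hu : u * u = 1) (hw : w * w = 1)
    (h : orderOf (u * w) = 0) (n : ℕ) :
    (closure {u, u * (u * w) ^ n}).relIndex (closure {u, w}) = n := by
  have hmap : closure {u, u * (u * w) ^ n} =
      (closure {sr 0, sr (n : ZMod 0)}).map (dihedralLift u w hu hw) := by
    rw [MonoidHom.map_closure, Set.image_pair, dihedralLift_sr_zero, dihedralLift_sr_natCast]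
  rw [hmap, ← dihedralLift_range hu hw, MonoidHom.range_eq_map,
    relIndex_map_map_of_injective _ _ (dihedralLift_injective hu hw h), relIndex_top_right,
    index_closure_sr_zero_sr_natCast]

end DihedralLift

namespace SharplyTwoTransitive

open DihedralGroup

variable {G X : Type*} [Group G] [MulAction G X]

theorem eq_of_smul_eq_smul (h : SharplyTwoTransitive G X) {x y : X} (hxy : x ≠ y) {g g' : G}
    (hx : g • x = g' • x) (hy : g • y = g' • y) : g = g' :=
  (h.2 x y _ _ hxy ((MulAction.injective g').ne hxy)).unique ⟨hx, hy⟩ ⟨rfl, rfl⟩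

theorem eq_of_smul_eq_self (h : SharplyTwoTransitive G X) {g : G} (hg : g ≠ 1) {x y : X}
    (hx : g • x = x) (hy : g • y = y) : x = y := by
  by_contra hxy
  exact hg (h.eq_of_smul_eq_smul hxy (by rwa [one_smul]) (by rwa [one_smul]))

theorem exists_smul_ne (h : SharplyTwoTransitive G X) {g : G} (hg : g ≠ 1) :
    ∃ x : X, g • x ≠ x := by
  by_contra! hfix
  obtain ⟨x, y, hxy⟩ := h.1
  exact hg (h.eq_of_smul_eq_smul hxy (by simp [hfix]) (by simp [hfix]))

theorem exists_conj_eq (h : SharplyTwoTransitive G X) {i u : G} (hi : IsInvolution i)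
    (hu : IsInvolution u) : ∃ c : G, c * i * c⁻¹ = u := by
  obtain ⟨z, hz⟩ := h.exists_smul_ne hi.ne_one
  obtain ⟨x, hx⟩ := h.exists_smul_ne hu.ne_one
  obtain ⟨c, hcz, hciz⟩ := (h.2 z (i • z) x (u • x) (Ne.symm hz) (Ne.symm hx)).exists
  have hcx : c⁻¹ • x = z := inv_smul_eq_iff.mpr hcz.symm
  have hcux : c⁻¹ • u • x = i • z := inv_smul_eq_iff.mpr hciz.symm
  refine ⟨c, h.eq_of_smul_eq_smul (Ne.symm hx) ?_ ?_⟩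
  · simp only [mul_smul, hcx, hciz]
  · simp only [mul_smul, hcux, hi.smul_smul_self, hu.smul_smul_self, hcz]

theorem exists_smul_eq_self (h : SharplyTwoTransitive G X) (hchar : ActionCharZero G X) {u : G}
    (hu : IsInvolution u) : ∃ x : X, u • x = x := by
  obtain ⟨i, x, hi, hix⟩ := hchar.1
  obtain ⟨c, rfl⟩ := h.exists_conj_eq hi hu
  exact ⟨c • x, by simp [mul_smul, hix]⟩

theorem eq_of_smul_eq_self_of_isInvolution (h : SharplyTwoTransitive G X)
    (hchar : ActionCharZero G X) {u j : G} (hu : IsInvolution u) (hj : IsInvolution j) {p : X}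
    (hup : u • p = p) (hjp : j • p = p) : u = j := by
  by_contra huj
  have := h.1
  obtain ⟨x, hxp⟩ := exists_ne p
  have hux : u • x ≠ x := fun hx => hxp (h.eq_of_smul_eq_self hu.ne_one hx hup)
  have hjx : j • x ≠ p := fun hx => hxp (MulAction.injective j (hx.trans hjp.symm))
  have hujx : u • j • x ≠ j • x := fun hx => hjx (h.eq_of_smul_eq_self hu.ne_one hx hup)
  obtain ⟨c, hcx, hcux⟩ :=
    (h.2 x (u • x) (j • x) (u • j • x) (Ne.symm hux) (Ne.symm hujx)).exists
  -- `c * u` and `u * c` agree on `x` and `u • x`, so `c` commutes with `u`, and then `c = j`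
  have hcu : c * u = u * c := h.eq_of_smul_eq_smul (Ne.symm hux)
    (by simp only [mul_smul, hcx, hcux]) (by simp only [mul_smul, hu.smul_smul_self, hcx, hcux])
  have hcp : c • p = p := h.eq_of_smul_eq_self hu.ne_one
    (by rw [← mul_smul, ← hcu, mul_smul, hup]) hup
  have hcj : c = j := h.eq_of_smul_eq_smul hxp hcx (hcp.trans hjp.symm)
  subst hcj
  have hsq : (u * c) ^ 2 = 1 := by
    rw [pow_two, mul_assoc, ← mul_assoc c, hcu, ← mul_assoc, ← mul_assoc, hu.mul_self_s15, one_mul,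
      hj.mul_self_s15]
  exact orderOf_eq_zero_iff'.mp (hchar.2 u c hu hj huj) 2 two_pos hsq

theorem exists_conj_eq_self_and_conj_eq (h : SharplyTwoTransitive G X)
    (hchar : ActionCharZero G X) {u j v : G} (hu : IsInvolution u) (hj : IsInvolution j)
    (hv : IsInvolution v) (huj : u ≠ j) (huv : u ≠ v) :
    ∃ c : G, c * u * c⁻¹ = u ∧ c * j * c⁻¹ = v := by
  obtain ⟨p, hp⟩ := h.exists_smul_eq_self hchar hu
  obtain ⟨q, hq⟩ := h.exists_smul_eq_self hchar hv
  obtain ⟨r, hr⟩ := h.exists_smul_eq_self hchar hj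
  have hpr : p ≠ r := fun hpr =>
    huj (h.eq_of_smul_eq_self_of_isInvolution hchar hu hj hp (hpr ▸ hr))
  have hpq : p ≠ q := fun hpq =>
    huv (h.eq_of_smul_eq_self_of_isInvolution hchar hu hv hp (hpq ▸ hq))
  obtain ⟨c, hcp, hcr⟩ := (h.2 p r p q hpr hpq).exists
  have hconj {g : G} {x : X} (hgx : g • x = x) : (c * g * c⁻¹) • c • x = c • x := by
    simp [mul_smul, hgx]
  exact ⟨c, h.eq_of_smul_eq_self_of_isInvolution hchar (hu.conj c) hu (hcp ▸ hconj hp) hp,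
    h.eq_of_smul_eq_self_of_isInvolution hchar (hj.conj c) hv (hcr ▸ hconj hr) hq⟩

theorem exists_isInvolution_mul_pow_eq (h : SharplyTwoTransitive G X)
    (hchar : ActionCharZero G X) {u v : G} (hu : IsInvolution u) (hv : IsInvolution v)
    (huv : u ≠ v) {n : ℕ} (hn : n ≠ 0) :
    ∃ w : G, IsInvolution w ∧ w ≠ u ∧ (u * w) ^ n = u * v := by
  have hφ := dihedralLift_injective hu.mul_self_s15 hv.mul_self_s15 (hchar.2 u v hu hv huv)
  have hj : IsInvolution (u * (u * v) ^ n) := by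
    rw [← dihedralLift_sr_natCast hu.mul_self_s15 hv.mul_self_s15 n, IsInvolution,
      orderOf_injective _ hφ, orderOf_sr]
  have huj : u ≠ u * (u * v) ^ n := by
    rw [← dihedralLift_sr_natCast hu.mul_self_s15 hv.mul_self_s15 n]
    nth_rewrite 1 [← dihedralLift_sr_zero hu.mul_self_s15 hv.mul_self_s15]
    exact hφ.ne (by simpa [eq_comm] using hn)
  obtain ⟨c, hcu, hcv⟩ := h.exists_conj_eq_self_and_conj_eq hchar hu hj hv huj huv
  refine ⟨c * v * c⁻¹, hv.conj c, fun hw => huv (by simpa using (hw.trans hcu.symm).symm), ?_⟩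
  calc (u * (c * v * c⁻¹)) ^ n = MulAut.conj c ((u * v) ^ n) := by
        rw [map_pow, map_mul, MulAut.conj_apply, MulAut.conj_apply, hcu]
    _ = MulAut.conj c (u * (u * (u * v) ^ n)) := by rw [← mul_assoc, hu.mul_self_s15, one_mul]
    _ = u * v := by rw [map_mul, MulAut.conj_apply, MulAut.conj_apply, hcu, hcv]

end SharplyTwoTransitive

theorem Rat.mul_factorial_den (q : ℚ) : q * q.den ! = q.num * (q.den - 1)! := by
  rw [← Nat.mul_factorial_pred q.den_ne_zero, Nat.cast_mul, ← mul_assoc, Rat.mul_den_eq_num]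

theorem Rat.exists_mul_factorial_eq_intCast {q : ℚ} {n : ℕ} (h : q.den ≤ n) :
    ∃ z : ℤ, q * n ! = z := by
  obtain ⟨k, hk⟩ := Nat.dvd_factorial q.den_pos h
  exact ⟨q.num * k, by rw [hk]; push_cast; rw [← mul_assoc, Rat.mul_den_eq_num]⟩

section RatPow

variable {G : Type*} [Group G] {s : ℕ → G}

theorem pow_factorial_div_factorial (hs : ∀ n, s (n + 1) ^ (n + 1) = s n) {m n : ℕ}
    (hmn : m ≤ n) : s n ^ (n ! / m !) = s m := by
  induction n, hmn using Nat.le_induction with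
  | base => rw [Nat.div_self m.factorial_pos, pow_one]
  | succ n hmn ih =>
    rw [Nat.factorial_succ, Nat.mul_div_assoc _ (Nat.factorial_dvd_factorial hmn), pow_mul, hs, ih]

theorem zpow_eq_zpow_of_mul_factorial_eq (hs : ∀ n, s (n + 1) ^ (n + 1) = s n) {m n : ℕ}
    {a b : ℤ} (hab : a * n ! = b * m !) : s m ^ a = s n ^ b := by
  wlog hmn : m ≤ n generalizing m n a b
  · exact (this hab.symm (le_of_not_ge hmn)).symm
  obtain ⟨k, hk⟩ := Nat.factorial_dvd_factorial hmn
  rw [← pow_factorial_div_factorial hs hmn, hk, Nat.mul_div_cancel_left _ m.factorial_pos,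
    ← zpow_natCast, ← zpow_mul]
  congr 1
  rw [hk, Nat.cast_mul] at hab
  exact mul_left_cancel₀ (by positivity : (m ! : ℤ) ≠ 0) (by linear_combination hab)

/-- When `s (n + 1) ^ (n + 1) = s n` for all `n`, `s n` behaves as `s 0 ^ (1 / n!)`, and
`ratPow s q` as `s 0 ^ q`. -/
def ratPow (s : ℕ → G) (q : ℚ) : G := s q.den ^ (q.num * (q.den - 1)!)

theorem ratPow_eq_zpow (hs : ∀ n, s (n + 1) ^ (n + 1) = s n) {q : ℚ} {n : ℕ} {z : ℤ}
    (hz : q * n ! = z) : ratPow s q = s n ^ z := by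
  refine zpow_eq_zpow_of_mul_factorial_eq hs ?_
  have h : ((q.num * (q.den - 1)! * n ! : ℤ) : ℚ) = ((z * q.den ! : ℤ) : ℚ) := by
    push_cast
    rw [← Rat.mul_factorial_den, ← hz]
    ring
  exact_mod_cast h

def ratPowHom (hs : ∀ n, s (n + 1) ^ (n + 1) = s n) : Multiplicative ℚ →* G where
  toFun q := ratPow s q.toAdd
  map_one' := by simpa using ratPow_eq_zpow hs (q := 0) (n := 0) (z := 0) (by simp)
  map_mul' q₁ q₂ := by
    set n := max q₁.toAdd.den q₂.toAdd.den
    obtain ⟨z₁, h₁⟩ := Rat.exists_mul_factorial_eq_intCast (le_max_left _ _ : _ ≤ n)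
    obtain ⟨z₂, h₂⟩ := Rat.exists_mul_factorial_eq_intCast (le_max_right _ _ : _ ≤ n)
    have h₁₂ : (q₁ * q₂).toAdd * n ! = ((z₁ + z₂ : ℤ) : ℚ) := by
      rw [toAdd_mul, add_mul, h₁, h₂, Int.cast_add]
    rw [ratPow_eq_zpow hs h₁, ratPow_eq_zpow hs h₂, ratPow_eq_zpow hs h₁₂, zpow_add]

theorem ratPowHom_apply (hs : ∀ n, s (n + 1) ^ (n + 1) = s n) (q : Multiplicative ℚ) :
    ratPowHom hs q = ratPow s q.toAdd := rfl

theorem ratPow_neg (hs : ∀ n, s (n + 1) ^ (n + 1) = s n) {u : G}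
    (hu : ∀ n, u * s n * u⁻¹ = (s n)⁻¹) (q : ℚ) : ratPow s (-q) = u * ratPow s q * u⁻¹ := by
  rw [ratPow_eq_zpow hs (z := -(q.num * (q.den - 1)!)) (n := q.den)
    (by rw [neg_mul, Rat.mul_factorial_den]; push_cast; rfl)]
  rw [ratPow, ← MulAut.conj_apply, map_zpow, MulAut.conj_apply, hu, inv_zpow, zpow_neg]

theorem eq_zero_of_ratPow_eq_one (hs : ∀ n, s (n + 1) ^ (n + 1) = s n)
    (hs0 : ¬IsOfFinOrder (s 0)) {q : ℚ} (hq : ratPow s q = 1) : q = 0 := by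
  have hfin : ¬IsOfFinOrder (s q.den) := fun hfin =>
    hs0 (pow_factorial_div_factorial hs (Nat.zero_le _) ▸ hfin.pow)
  have h := injective_zpow_iff_not_isOfFinOrder.mpr hfin (hq.trans (zpow_zero _).symm)
  simpa [Nat.factorial_ne_zero] using h

def unitsIntHom (u : G) (hu : u * u = 1) : ℤˣ →* G where
  toFun ε := if ε = 1 then 1 else u
  map_one' := if_pos rfl
  map_mul' a b := by
    rcases Int.units_eq_one_or a with rfl | rfl <;> rcases Int.units_eq_one_or b with rfl | rfl <;>
      simp [hu]

theorem unitsIntHom_neg_one (u : G) (hu : u * u = 1) : unitsIntHom u hu (-1) = u :=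
  show (if (-1 : ℤˣ) = 1 then 1 else u) = u from if_neg (by decide)

theorem dqAut_neg_one (q : Multiplicative ℚ) : dqAut (-1) q = q⁻¹ := by
  change Multiplicative.ofAdd ((-1 : ℤˣ) • q.toAdd) = q⁻¹
  simp

theorem exists_injective_monoidHom_DQ (hs : ∀ n, s (n + 1) ^ (n + 1) = s n)
    (hs0 : ¬IsOfFinOrder (s 0)) {u : G} (hu : IsInvolution u)
    (hus : ∀ n, u * s n * u⁻¹ = (s n)⁻¹) :
    ∃ Φ : DQ →* G, Function.Injective Φ ∧
      Φ (SemidirectProduct.inr (-1)) = u ∧ Φ (SemidirectProduct.inl (.ofAdd 1)) = s 0 := by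
  set T := ratPowHom hs
  set U := unitsIntHom u hu.mul_self_s15
  have hcompat (ε : ℤˣ) :
      T.comp (dqAut ε).toMonoidHom = (MulAut.conj (U ε)).toMonoidHom.comp T := by
    ext q
    rcases Int.units_eq_one_or ε with rfl | rfl
    · simp
    · simp [dqAut_neg_one, U, unitsIntHom_neg_one, T, ratPowHom_apply, ratPow_neg hs hus]
  refine ⟨SemidirectProduct.lift T U hcompat, ?_, ?_, ?_⟩
  · rw [injective_iff_map_eq_one]
    rintro ⟨q, ε⟩ hq
    rw [SemidirectProduct.mk_eq_inl_mul_inr, map_mul, SemidirectProduct.lift_inl,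
      SemidirectProduct.lift_inr] at hq
    rcases Int.units_eq_one_or ε with rfl | rfl
    · rw [map_one, mul_one, ratPowHom_apply] at hq
      have hq0 := eq_zero_of_ratPow_eq_one hs hs0 hq
      ext <;> simp [hq0]
    · rw [unitsIntHom_neg_one, mul_eq_one_iff_eq_inv, inv_eq_of_mul_eq_one_right hu.mul_self_s15]
        at hq
      have hqq := eq_zero_of_ratPow_eq_one hs hs0 (q := (q * q).toAdd)
        (by rw [← ratPowHom_apply hs, map_mul, hq, hu.mul_self_s15])
      have hq1 : q = 1 := by
        rw [toAdd_mul, ← two_mul] at hqq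
        simpa using hqq
      exact absurd (by rw [← hq, hq1, map_one]) hu.ne_one
  · rw [SemidirectProduct.lift_inr, unitsIntHom_neg_one]
  · rw [SemidirectProduct.lift_inl, ratPowHom_apply, toAdd_ofAdd,
      ratPow_eq_zpow hs (n := 0) (z := 1) (by simp), zpow_one]

end RatPow

theorem exists_seq_of_forall_exists {α : Type*} {P : α → Prop} {R : ℕ → α → α → Prop} {a : α}
    (ha : P a) (h : ∀ n a, P a → ∃ b, P b ∧ R n a b) :
    ∃ f : ℕ → α, f 0 = a ∧ ∀ n, P (f n) ∧ R n (f n) (f (n + 1)) := by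
  choose g hgP hgR using h
  let f : ℕ → {x // P x} := fun n => Nat.rec ⟨a, ha⟩ (fun n x => ⟨g n x.1 x.2, hgP n x.1 x.2⟩) n
  exact ⟨fun n => (f n).1, rfl, fun n => ⟨(f n).2, hgR n _ (f n).2⟩⟩

/-- In a sharply 2-transitive group of characteristic 0, any two distinct involutions `u, v`
generate a subgroup contained in a subgroup isomorphic to `D_ℚ = ℚ ⋊ ℤ/2ℤ`. More precisely,
there is an increasing chain of subgroups `D₁ ⊆ D₂ ⊆ …` with `D₁ = ⟨u, v⟩`, each `Dₙ`
isomorphic to the infinite dihedral group (`DihedralGroup 0`), and `Dₙ₋₁` of index `n`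
in `Dₙ` for every `n ≥ 2`. -/
theorem stmt_15 {G X : Type*} [Group G] [MulAction G X]
    (h2t : SharplyTwoTransitive G X) (hchar : ActionCharZero G X)
    (u v : G) (hu : IsInvolution u) (hv : IsInvolution v) (huv : u ≠ v) :
    (∃ D : Subgroup G, Subgroup.closure {u, v} ≤ D ∧ Nonempty (D ≃* DQ)) ∧
    ∃ D : ℕ → Subgroup G, D 1 = Subgroup.closure {u, v} ∧
      (∀ n, 1 ≤ n → Nonempty (D n ≃* DihedralGroup 0)) ∧
      (∀ n, 1 ≤ n → D n ≤ D (n + 1)) ∧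
      (∀ n, 2 ≤ n → (D (n - 1)).relIndex (D n) = n) := by
  obtain ⟨w, hw0, hw⟩ := exists_seq_of_forall_exists (P := fun w => IsInvolution w ∧ w ≠ u)
    (R := fun n w w' => (u * w') ^ (n + 1) = u * w) ⟨hv, huv.symm⟩ fun n x ⟨hx, hxu⟩ =>
      (h2t.exists_isInvolution_mul_pow_eq hchar hu hx hxu.symm n.succ_ne_zero).imp
        fun _ ⟨h₁, h₂, h₃⟩ => ⟨⟨h₁, h₂⟩, h₃⟩
  have hinv n : w n * w n = 1 := (hw n).1.1.mul_self_s15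
  have hord n : orderOf (u * w n) = 0 := hchar.2 u _ hu (hw n).1.1 (hw n).1.2.symm
  have hstep n : u * (u * w (n + 1)) ^ (n + 1) = w n := by
    rw [(hw n).2, ← mul_assoc, hu.mul_self_s15, one_mul]
  have hw1 : w 1 = v := by simpa [hw0] using (hw 0).2
  constructor
  · obtain ⟨Φ, hΦ, hΦu, hΦs⟩ := exists_injective_monoidHom_DQ (s := fun n => u * w n)
      (fun n => (hw n).2) (orderOf_eq_zero_iff.mp (hord 0)) hu
      (fun n => conj_mul_eq_inv hu.mul_self_s15 (hinv n))
    refine ⟨Φ.range, ?_, ⟨(MonoidHom.ofInjective hΦ).symm⟩⟩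
    rw [closure_le, Set.insert_subset_iff, Set.singleton_subset_iff]
    refine ⟨⟨_, hΦu⟩, ⟨.inr (-1) * .inl (.ofAdd 1), ?_⟩⟩
    rw [map_mul, hΦu, hΦs, ← mul_assoc, hu.mul_self_s15, one_mul, hw0]
  · refine ⟨fun n => closure {u, w n}, by simp only [hw1],
      fun n _ => nonempty_closure_pair_mulEquiv hu.mul_self_s15 (hinv n) (hord n), fun n _ => ?_,
      fun n hn => ?_⟩
    · dsimp only
      rw [← hstep n]
      exact closure_pair_mul_pow_le u (w (n + 1)) (n + 1)
    obtain ⟨m, rfl⟩ : ∃ m, n = m + 1 := ⟨n - 1, by omega⟩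
    dsimp only
    rw [Nat.add_sub_cancel, ← hstep m]
    exact relIndex_closure_pair hu.mul_self_s15 (hinv _) (hord _) _
end
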